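/- Fix integers L ≥ 2, r_Σ ≥ 1, and N > r_Σ. Consider tuples (M_1,…,M_L) of nonnegative integers with M_i ≤ N − r_Σ for all i, and write M = M_1 + … + M_L and f(M, M_i, M_j) = max{M − r_Σ, M_i} + max{M − r_Σ, M_j}. Then the minimum of M over all tuples satisfying, for every pair i ≠ j, the four constraints f(M,M_i,M_j) − 2(M − 2r_Σ) > 0, f(M,M_i,M_j) − 2(M_i − r_Σ) > 0, f(M,M_i,M_j) − 2(M_j − r_Σ) > 0, and f(M,M_i,M_j) > 0, equals min{L − 1, r_Σ + 1}; moreover, a minimizer is obtained by setting exactly min{L − 1, r_Σ + 1} of the M_i equal to 1 and the rest equal to 0. (The integer-programming solution underlying the paper's Proposition 5, Appendix C.) -/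
import Mathlib


open scoped Classical

/-- `f(M, M_i, M_j) = max{M − r_Σ, M_i} + max{M − r_Σ, M_j}`, with real subtraction. -/
noncomputable def fB (rSig M Mi Mj : ℕ) : ℝ :=
  max ((M : ℝ) - rSig) (Mi : ℝ) + max ((M : ℝ) - rSig) (Mj : ℝ)

/-- Feasibility of a measurement allocation `(M_1, …, M_L)` in the integer program of
Appendix C of the paper. -/
noncomputable def Feasible (L N rSig : ℕ) (Mv : Fin L → ℕ) : Prop :=
  (∀ i, Mv i ≤ N - rSig) ∧
  ∀ i j : Fin L, i ≠ j →
    (fB rSig (∑ k, Mv k) (Mv i) (Mv j) - 2 * ((∑ k, Mv k : ℕ) - 2 * (rSig : ℝ)) > 0 ∧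
     fB rSig (∑ k, Mv k) (Mv i) (Mv j) - 2 * ((Mv i : ℝ) - rSig) > 0 ∧
     fB rSig (∑ k, Mv k) (Mv i) (Mv j) - 2 * ((Mv j : ℝ) - rSig) > 0 ∧
     fB rSig (∑ k, Mv k) (Mv i) (Mv j) > 0)

/-- integer-programming solution behind the paper's Proposition 5,
Appendix C. The minimum of `M = Σ_i M_i` over feasible allocations equals
`min{L−1, r_Σ+1}`, and a minimizer sets exactly `min{L−1, r_Σ+1}` of the `M_i` to `1`
and the rest to `0`. -/
theorem stmt15 (L rSig N : ℕ) (hL : 2 ≤ L) (hr : 1 ≤ rSig) (hN : rSig < N) :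
    IsLeast {m : ℕ | ∃ Mv : Fin L → ℕ, Feasible L N rSig Mv ∧ m = ∑ i, Mv i}
      (min (L - 1) (rSig + 1)) ∧
    ∃ Mv : Fin L → ℕ, Feasible L N rSig Mv ∧ (∀ i, Mv i = 0 ∨ Mv i = 1) ∧
      (Finset.univ.filter (fun i => Mv i = 1)).card = min (L - 1) (rSig + 1) ∧
      ∑ i, Mv i = min (L - 1) (rSig + 1) := by
  set m := min (L - 1) (rSig + 1) with hm
  have hm1 : 1 ≤ m := by omega
  have hmL : m ≤ L - 1 := by omega
  have hmr : m ≤ rSig + 1 := by omega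
  set Mv : Fin L → ℕ := fun i => if (i : ℕ) < m then 1 else 0 with hMvdef
  have hMv01 : ∀ i, Mv i = 0 ∨ Mv i = 1 := by
    intro i
    by_cases h : (i : ℕ) < m <;> simp [hMvdef, h]
  have hcard : (Finset.univ.filter (fun i : Fin L => (i : ℕ) < m)).card = m := by
    have h1 : (Finset.range L).filter (fun i => i < m) = Finset.range m := by
      ext x
      simp only [Finset.mem_filter, Finset.mem_range]
      omega
    rw [Finset.card_filter,
      Fin.sum_univ_eq_sum_range (fun i => if i < m then 1 else 0) L,
      ← Finset.card_filter, h1, Finset.card_range]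
  have hsum : ∑ i, Mv i = m := by
    rw [hMvdef]
    rw [← Finset.card_filter]
    exact hcard
  have hcard1 : (Finset.univ.filter (fun i : Fin L => Mv i = 1)).card = m := by
    have : (Finset.univ.filter (fun i : Fin L => Mv i = 1)) =
        (Finset.univ.filter (fun i : Fin L => (i : ℕ) < m)) := by
      apply Finset.filter_congr
      intro i _
      by_cases h : (i : ℕ) < m <;> simp [hMvdef, h]
    rw [this, hcard]
  -- feasibility of the witness
  have hfeas : Feasible L N rSig Mv := by
    constructor
    · intro i
      rcases hMv01 i with h | h <;> omega
    · intro i j hij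
      rw [hsum]
      have hmR : (m : ℝ) ≤ rSig + 1 := by exact_mod_cast hmr
      have hrR : (1 : ℝ) ≤ rSig := by exact_mod_cast hr
      have hMiR : (Mv i : ℝ) ≤ 1 := by rcases hMv01 i with h | h <;> simp [h]
      have hMjR : (Mv j : ℝ) ≤ 1 := by rcases hMv01 j with h | h <;> simp [h]
      have hMi0 : (0 : ℝ) ≤ (Mv i : ℝ) := Nat.cast_nonneg _
      have hMj0 : (0 : ℝ) ≤ (Mv j : ℝ) := Nat.cast_nonneg _
      have key : 1 ≤ fB rSig m (Mv i) (Mv j) := by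
        unfold fB
        by_cases hi : (i : ℕ) < m
        · have h1 : (Mv i : ℝ) = 1 := by simp [hMvdef, hi]
          have h2 : (1 : ℝ) ≤ max ((m : ℝ) - rSig) (Mv i : ℝ) := h1 ▸ le_max_right _ _
          have h3 : (0 : ℝ) ≤ max ((m : ℝ) - rSig) (Mv j : ℝ) :=
            le_trans hMj0 (le_max_right _ _)
          linarith
        · by_cases hj : (j : ℕ) < m
          · have h1 : (Mv j : ℝ) = 1 := by simp [hMvdef, hj]
            have h2 : (1 : ℝ) ≤ max ((m : ℝ) - rSig) (Mv j : ℝ) := h1 ▸ le_max_right _ _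
            have h3 : (0 : ℝ) ≤ max ((m : ℝ) - rSig) (Mv i : ℝ) :=
              le_trans hMi0 (le_max_right _ _)
            linarith
          · -- both indices ≥ m, so m ≤ L - 2, hence m = rSig + 1
            have hvne : (i : ℕ) ≠ (j : ℕ) := fun h => hij (Fin.ext h)
            have hiL : (i : ℕ) < L := i.isLt
            have hjL : (j : ℕ) < L := j.isLt
            have hmeq : m = rSig + 1 := by omega
            have h1 : (1 : ℝ) ≤ (m : ℝ) - rSig := by
              rw [hmeq]
              push_cast
              linarith
            have h2 : (1 : ℝ) ≤ max ((m : ℝ) - rSig) (Mv i : ℝ) :=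
              le_trans h1 (le_max_left _ _)
            have h3 : (1 : ℝ) ≤ max ((m : ℝ) - rSig) (Mv j : ℝ) :=
              le_trans h1 (le_max_left _ _)
            linarith
      refine ⟨by linarith, by linarith, by linarith, by linarith⟩
  constructor
  · constructor
    · exact ⟨Mv, hfeas, hsum.symm⟩
    · rintro n ⟨Wv, ⟨hWb, hWpair⟩, rfl⟩
      by_contra hlt
      push_neg at hlt
      -- sum < m : at least two zero coordinates
      have h1 : (Finset.univ.filter (fun i : Fin L => Wv i ≠ 0)).card ≤ ∑ i, Wv i := by
        calc (Finset.univ.filter (fun i : Fin L => Wv i ≠ 0)).card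
            = (Finset.univ.filter (fun i : Fin L => Wv i ≠ 0)).card • 1 := by simp
          _ ≤ ∑ i ∈ Finset.univ.filter (fun i : Fin L => Wv i ≠ 0), Wv i :=
              Finset.card_nsmul_le_sum _ _ _ (fun i hi => by
                simp only [Finset.mem_filter] at hi
                omega)
          _ ≤ ∑ i, Wv i :=
              Finset.sum_le_sum_of_subset (Finset.filter_subset _ _)
      have hsplit := Finset.card_filter_add_card_filter_not
        (s := (Finset.univ : Finset (Fin L))) (p := fun i => Wv i ≠ 0)
      have hcardL : (Finset.univ : Finset (Fin L)).card = L := by simp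
      have h2 : 1 < (Finset.univ.filter (fun i : Fin L => ¬ Wv i ≠ 0)).card := by omega
      obtain ⟨i, hi, j, hj, hij⟩ := Finset.one_lt_card.mp h2
      simp only [Finset.mem_filter, not_not] at hi hj
      have h4 := (hWpair i j hij).2.2.2
      rw [hi.2, hj.2] at h4
      unfold fB at h4
      have hMr : ((∑ k, Wv k : ℕ) : ℝ) ≤ rSig := by
        have : ∑ k, Wv k ≤ rSig := by omega
        exact_mod_cast this
      have h5 : max (((∑ k, Wv k : ℕ) : ℝ) - rSig) ((0 : ℕ) : ℝ) ≤ 0 :=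
        max_le (by linarith) (by norm_num)
      linarith
  · exact ⟨Mv, hfeas, hMv01, hcard1, hsum⟩
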